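/- Let π* be a 3-wise median of an election with voting profile V over a finite set C of alternatives, and let x, y be two alternatives occupying consecutive positions in π*. If δ_{xy} > Σ_{z ∈ C∖{x,y}} max(0, Q_{y,x,z}), then x is ranked before y in π*. -/

import Mathlib

open Finset

variable {α : Type}

/-- A ranking of the alternatives: a duplicate-free list containing every
alternative; earlier in the list means more preferred. -/
def IsRanking (l : List α) : Prop := l.Nodup ∧ ∀ a : α, a ∈ l

/-- The 3-wise Kendall tau distance between two rankings: the number of subsets
`S` with `|S| ≤ 3` on which the two rankings have different top elements. -/
def d3 [Fintype α] [DecidableEq α] (l m : List α) : ℕ :=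
  ((Finset.univ : Finset α).powerset.filter
    (fun S => S.card ≤ 3 ∧ ∃ a ∈ S, ∃ b ∈ S, a ≠ b ∧
      (∀ c ∈ S, l.idxOf a ≤ l.idxOf c) ∧ (∀ c ∈ S, m.idxOf b ≤ m.idxOf c))).card

/-- Total 3-wise Kendall tau distance from a ranking to a voting profile. -/
def d3V [Fintype α] [DecidableEq α] (l : List α) (V : Multiset (List α)) : ℕ :=
  (V.map (fun v => d3 l v)).sum

/-- A 3-wise median of the voting profile `V`. -/
def IsMedian3 [Fintype α] [DecidableEq α] (V : Multiset (List α)) (l : List α) : Prop :=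
  IsRanking l ∧ ∀ m : List α, IsRanking m → d3V l V ≤ d3V m V

/-- The 2-wise Kendall tau distance between two rankings: the number of
two-element subsets on which the relative orders differ. -/
def d2 [Fintype α] [DecidableEq α] (l m : List α) : ℕ :=
  ((Finset.univ : Finset α).powerset.filter
    (fun S => S.card = 2 ∧ ∃ a ∈ S, ∃ b ∈ S,
      l.idxOf a < l.idxOf b ∧ m.idxOf b < m.idxOf a)).card

/-- Total 2-wise Kendall tau distance from a ranking to a voting profile. -/
def d2V [Fintype α] [DecidableEq α] (l : List α) (V : Multiset (List α)) : ℕ :=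
  (V.map (fun v => d2 l v)).sum

/-- A 2-wise median of the voting profile `V`. -/
def IsMedian2 [Fintype α] [DecidableEq α] (V : Multiset (List α)) (l : List α) : Prop :=
  IsRanking l ∧ ∀ m : List α, IsRanking m → d2V l V ≤ d2V m V

/-- `x ≥ₛ y`: `x` is ranked before `y` in at least `s·|V|` votes. -/
def geq [DecidableEq α] (V : Multiset (List α)) (s : ℝ) (x y : α) : Prop :=
  s * (V.card : ℝ) ≤ (V.countP (fun v => v.idxOf x < v.idxOf y) : ℝ)

/-- `x` is a non-dirty alternative with respect to the threshold `s`. -/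
def NonDirty [DecidableEq α] (V : Multiset (List α)) (s : ℝ) (x : α) : Prop :=
  ∀ y : α, y ≠ x → geq V s x y ∨ geq V s y x

/-- The election satisfies the `3/4`-majority rule with respect to the 3-wise
Kemeny voting scheme. -/
def Satisfies34 [Fintype α] [DecidableEq α] (V : Multiset (List α)) : Prop :=
  ∀ x : α, NonDirty V (3/4) x → ∀ y : α, y ≠ x →
    (geq V (3/4) x y → ∀ π : List α, IsMedian3 V π → π.idxOf x < π.idxOf y) ∧
    (geq V (3/4) y x → ∀ π : List α, IsMedian3 V π → π.idxOf y < π.idxOf x)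

/-- `n_{xy}`: the number of votes ranking `x` before `y`. -/
def nn2 [DecidableEq α] (V : Multiset (List α)) (x y : α) : ℕ :=
  V.countP (fun v => v.idxOf x < v.idxOf y)

/-- `n_{xyz}`: the number of votes ranking `x` before `y` before `z`. -/
def nn3 [DecidableEq α] (V : Multiset (List α)) (x y z : α) : ℕ :=
  V.countP (fun v => v.idxOf x < v.idxOf y ∧ v.idxOf y < v.idxOf z)

/-- `n_{xyzt}`: the number of votes ranking `x` before `y` before `z` before `t`. -/
def nn4 [DecidableEq α] (V : Multiset (List α)) (x y z t : α) : ℕ :=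
  V.countP (fun v => v.idxOf x < v.idxOf y ∧ v.idxOf y < v.idxOf z ∧
    v.idxOf z < v.idxOf t)

/-- `δ_{xy} = n_{xy} - n_{yx}`. -/
def del [DecidableEq α] (V : Multiset (List α)) (x y : α) : ℤ :=
  (nn2 V x y : ℤ) - nn2 V y x

/-- `P_{x,y,z}`. -/
def Pq [DecidableEq α] (V : Multiset (List α)) (x y z : α) : ℤ :=
  3 * (nn3 V x z y : ℤ) + nn3 V x y z + nn3 V z x y + nn3 V z y x
    - 4 * nn3 V y z x - 2 * nn3 V y x z

/-- `Q_{x,y,z}`. -/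
def Qq [DecidableEq α] (V : Multiset (List α)) (x y z : α) : ℤ :=
  (nn3 V x y z : ℤ) + nn3 V x z y - nn3 V y x z - nn3 V y z x

/-- `R_{y,x,z,t}`. -/
def Rr [DecidableEq α] (V : Multiset (List α)) (y x z t : α) : ℤ :=
  2 * (nn4 V y z t x : ℤ) + 2 * nn4 V y z x t + nn4 V y t z x + nn4 V y t x z

/-- `S_{y,x,z,t} = R_{y,x,z,t} - R_{x,y,z,t}`. -/
def Ss [DecidableEq α] (V : Multiset (List α)) (y x z t : α) : ℤ :=
  Rr V y x z t - Rr V x y z t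

/-! If `y` immediately precedes `x` in `π`, swapping them changes the top element of a set `S`
only when `x, y ∈ S` and `y` is the top of `S` in `π`; among the sets of size at most 3 these are
`{x, y}` and the `{x, y, z}` with `z` ranked after `x`. Counting, for each of them, the votes whose
top element is `x` and those whose top element is `y` shows that the swap lowers the 3-wise
distance to `V` by `δ_{xy} - Σ_z Q_{y,x,z}`, which is positive under the hypothesis, against the
minimality of `π`. -/

theorem IsRanking.map_perm {l : List α} (hl : IsRanking l) (e : Equiv.Perm α) :
    IsRanking (l.map e) :=
  ⟨hl.1.map e.injective, fun a => List.mem_map.2 ⟨e.symm a, hl.2 _, e.apply_symm_apply a⟩⟩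

section

variable [DecidableEq α]

theorem List.idxOf_map_perm (e : Equiv.Perm α) (l : List α) (a : α) :
    (l.map e).idxOf a = l.idxOf (e.symm a) := by
  induction l with
  | nil => rfl
  | cons b t ih =>
    have : (e b == a) = (b == e.symm a) := by simp [Equiv.eq_symm_apply]
    simp only [List.map_cons, List.idxOf_cons, ih, this]

theorem IsRanking.idxOf_injective {l : List α} (hl : IsRanking l) : Function.Injective l.idxOf :=
  fun a _ h => (List.idxOf_inj (hl.2 a)).1 h

def IsTopOf (l : List α) (S : Finset α) (a : α) : Prop :=
  a ∈ S ∧ ∀ c ∈ S, l.idxOf a ≤ l.idxOf c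

instance (l : List α) (S : Finset α) : DecidablePred (IsTopOf l S) := by
  unfold IsTopOf; infer_instance

theorem exists_isTopOf (l : List α) {S : Finset α} (hS : S.Nonempty) : ∃ a, IsTopOf l S a :=
  S.exists_min_image l.idxOf hS

theorem IsTopOf.unique {l : List α} (hl : IsRanking l) {S : Finset α} {a b : α}
    (ha : IsTopOf l S a) (hb : IsTopOf l S b) : a = b :=
  hl.idxOf_injective (le_antisymm (ha.2 b hb.1) (hb.2 a ha.1))

def Disagree (l m : List α) (S : Finset α) : Prop :=
  ∃ a ∈ S, ∃ b ∈ S, a ≠ b ∧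
    (∀ c ∈ S, l.idxOf a ≤ l.idxOf c) ∧ (∀ c ∈ S, m.idxOf b ≤ m.idxOf c)

instance (l m : List α) : DecidablePred (Disagree l m) := by
  unfold Disagree; infer_instance

theorem disagree_iff_not_isTopOf {l m : List α} (hl : IsRanking l) (hm : IsRanking m)
    {S : Finset α} {a : α} (ha : IsTopOf l S a) : Disagree l m S ↔ ¬IsTopOf m S a := by
  obtain ⟨b, hb⟩ := exists_isTopOf m ⟨a, ha.1⟩
  constructor
  · rintro ⟨a', ha', b', hb', hne, hla', hmb'⟩ hma
    exact hne ((IsTopOf.unique hl ⟨ha', hla'⟩ ha).trans (IsTopOf.unique hm hma ⟨hb', hmb'⟩))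
  · exact fun hma => ⟨a, ha.1, b, hb.1, fun hab => hma (hab ▸ hb), ha.2, hb.2⟩

theorem d3_eq_card_filter [Fintype α] (l m : List α) :
    d3 l m = #{S ∈ univ.powerset | S.card ≤ 3 ∧ Disagree l m S} := by
  unfold d3 Disagree; congr!

theorem d3V_eq_sum_countP [Fintype α] (l : List α) (V : Multiset (List α)) :
    d3V l V = ∑ S ∈ univ.powerset with S.card ≤ 3, V.countP (fun v => Disagree l v S) := by
  induction V using Multiset.induction with
  | empty => simp [d3V]
  | cons v V ih =>
    rw [d3V, Multiset.map_cons, Multiset.sum_cons, ← d3V, ih]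
    simp only [Multiset.countP_cons, sum_add_distrib, sum_boole, filter_filter, Nat.cast_id]
    rw [add_comm, d3_eq_card_filter]

theorem idxOf_map_swap_le_of_le {π : List α} (hπ : IsRanking π) {x y : α}
    (hx : π.idxOf x = π.idxOf y + 1) {a c : α} (hac : ¬(a = y ∧ c = x))
    (h : π.idxOf a ≤ π.idxOf c) :
    (π.map (Equiv.swap x y)).idxOf a ≤ (π.map (Equiv.swap x y)).idxOf c := by
  have hinj : ∀ u w, π.idxOf u = π.idxOf w ↔ u = w := fun _ _ => hπ.idxOf_injective.eq_iff
  simp only [List.idxOf_map_perm, Equiv.symm_swap, Equiv.swap_apply_def]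
  split_ifs <;> grind

theorem IsTopOf.map_swap {π : List α} (hπ : IsRanking π) {x y : α}
    (hx : π.idxOf x = π.idxOf y + 1) {S : Finset α} {a : α} (ha : IsTopOf π S a)
    (hxa : x ∈ S → a ≠ y) : IsTopOf (π.map (Equiv.swap x y)) S a :=
  ⟨ha.1, fun c hc => idxOf_map_swap_le_of_le hπ hx
    (fun ⟨hay, hcx⟩ => hxa (hcx ▸ hc) hay) (ha.2 c hc)⟩

theorem IsTopOf.map_swap_of_mem {π : List α} {x y : α}
    {S : Finset α} (hy : IsTopOf π S y) (hxS : x ∈ S) :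
    IsTopOf (π.map (Equiv.swap x y)) S x := by
  refine ⟨hxS, fun c hc => ?_⟩
  have hc' : Equiv.swap x y c ∈ S := by
    rw [Equiv.swap_apply_def]; split_ifs
    exacts [hy.1, hxS, hc]
  simpa only [List.idxOf_map_perm, Equiv.symm_swap, Equiv.swap_apply_left] using hy.2 _ hc'

theorem disagree_map_swap_iff {π m : List α} (hπ : IsRanking π) (hm : IsRanking m) {x y : α}
    (hx : π.idxOf x = π.idxOf y + 1) {S : Finset α} (hS : ¬(x ∈ S ∧ IsTopOf π S y)) :
    Disagree (π.map (Equiv.swap x y)) m S ↔ Disagree π m S := by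
  rcases S.eq_empty_or_nonempty with rfl | hne
  · simp [Disagree]
  obtain ⟨a, ha⟩ := exists_isTopOf π hne
  have ha' := ha.map_swap hπ hx fun hxS hay => hS ⟨hxS, hay ▸ ha⟩
  rw [disagree_iff_not_isTopOf (hπ.map_perm _) hm ha', disagree_iff_not_isTopOf hπ hm ha]

theorem countP_disagree_eq {l : List α} (hl : IsRanking l) {V : Multiset (List α)}
    (hV : ∀ v ∈ V, IsRanking v) {S : Finset α} {a : α} (ha : IsTopOf l S a) :
    (V.countP (fun v => Disagree l v S) : ℤ) = V.card - V.countP (fun v => IsTopOf v S a) := by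
  rw [Multiset.card_eq_countP_add_countP (fun v => IsTopOf v S a),
    Multiset.countP_congr rfl fun v hv => propext (disagree_iff_not_isTopOf hl (hV v hv) ha)]
  push_cast; ring

theorem d3V_sub_d3V_map_swap [Fintype α] {π : List α} (hπ : IsRanking π)
    {V : Multiset (List α)} (hV : ∀ v ∈ V, IsRanking v) {x y : α}
    (hx : π.idxOf x = π.idxOf y + 1) :
    (d3V π V : ℤ) - d3V (π.map (Equiv.swap x y)) V =
      ∑ S ∈ univ.powerset with S.card ≤ 3 ∧ x ∈ S ∧ IsTopOf π S y,
        ((V.countP (fun v => IsTopOf v S x) : ℤ) - V.countP (fun v => IsTopOf v S y)) := by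
  rw [d3V_eq_sum_countP, d3V_eq_sum_countP]
  push_cast
  rw [← sum_sub_distrib, ← sum_filter_of_ne (p := fun S => x ∈ S ∧ IsTopOf π S y),
    filter_filter]
  · refine sum_congr rfl fun S hS => ?_
    obtain ⟨-, hxS, hy⟩ := (mem_filter.1 hS).2
    rw [countP_disagree_eq hπ hV hy,
      countP_disagree_eq (hπ.map_perm _) hV (hy.map_swap_of_mem hxS)]
    ring
  · intro S _ hne
    by_contra hS
    refine hne (sub_eq_zero.2 ?_)
    rw [Multiset.countP_congr rfl fun v hv => propext (disagree_map_swap_iff hπ (hV v hv) hx hS)]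

theorem ne_and_ne_of_idxOf_lt {π : List α} {x y z : α} (hx : π.idxOf x = π.idxOf y + 1)
    (hz : π.idxOf x < π.idxOf z) : z ≠ x ∧ z ≠ y :=
  ⟨fun h => by rw [h] at hz; omega, fun h => by rw [h] at hz; omega⟩

theorem filter_isTopOf_eq [Fintype α] {π : List α} (hπ : IsRanking π) {x y : α}
    (hx : π.idxOf x = π.idxOf y + 1) :
    {S ∈ (univ : Finset α).powerset | S.card ≤ 3 ∧ x ∈ S ∧ IsTopOf π S y} =
      insert {x, y} (({z | π.idxOf x < π.idxOf z} : Finset α).image fun z => {x, y, z}) := by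
  have hxy : x ≠ y := by rintro rfl; omega
  ext S
  simp only [mem_filter, mem_powerset, subset_univ, true_and, mem_insert, mem_image]
  constructor
  · rintro ⟨hcard, hxS, hy⟩
    have hsub : {x, y} ⊆ S := insert_subset hxS (singleton_subset_iff.2 hy.1)
    by_cases hcard2 : S.card ≤ 2
    · exact Or.inl (eq_of_subset_of_card_le hsub (by rw [card_pair hxy]; exact hcard2)).symm
    obtain ⟨z, hzS, hz⟩ := exists_mem_notMem_of_card_lt_card (s := {x, y}) (t := S)
      (by rw [card_pair hxy]; omega)
    simp only [mem_insert, mem_singleton, not_or] at hz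
    have hzx : π.idxOf z ≠ π.idxOf x := hπ.idxOf_injective.ne hz.1
    have hzy : π.idxOf z ≠ π.idxOf y := hπ.idxOf_injective.ne hz.2
    have hyz := hy.2 z hzS
    refine Or.inr ⟨z, by simp only [mem_univ, true_and]; omega, ?_⟩
    refine eq_of_subset_of_card_le (insert_subset hxS (insert_subset hy.1
      (singleton_subset_iff.2 hzS))) ?_
    rw [card_insert_of_notMem (by simp [hxy, Ne.symm hz.1]), card_pair (Ne.symm hz.2)]
    exact hcard
  · rintro (rfl | ⟨z, hz, rfl⟩)
    · refine ⟨card_le_two.trans (by norm_num), by simp, by simp, ?_⟩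
      simp [hx]
    · simp only [mem_univ, true_and] at hz
      refine ⟨card_le_three, by simp, by simp, ?_⟩
      simp only [mem_insert, mem_singleton, forall_eq_or_imp, forall_eq]
      omega

theorem countP_isTopOf_pair {V : Multiset (List α)} (hV : ∀ v ∈ V, IsRanking v) {x y : α}
    (hxy : x ≠ y) : V.countP (fun v => IsTopOf v {x, y} x) = nn2 V x y := by
  refine Multiset.countP_congr rfl fun v hv => propext ?_
  have := (hV v hv).idxOf_injective.ne hxy
  simp only [IsTopOf, mem_insert, mem_singleton, forall_eq_or_imp, forall_eq, true_or, le_refl,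
    true_and]
  omega

theorem countP_isTopOf_triple {V : Multiset (List α)} (hV : ∀ v ∈ V, IsRanking v) {x y z : α}
    (hxy : x ≠ y) (hxz : x ≠ z) (hyz : y ≠ z) :
    V.countP (fun v => IsTopOf v {x, y, z} x) = nn3 V x y z + nn3 V x z y := by
  rw [Multiset.countP_eq_countP_filter_add _ _ (fun v => v.idxOf y < v.idxOf z),
    Multiset.countP_filter, Multiset.countP_filter, nn3, nn3]
  congr 1 <;> refine Multiset.countP_congr rfl fun v hv => propext ?_ <;>
  · have := (hV v hv).idxOf_injective.ne hxy
    have := (hV v hv).idxOf_injective.ne hxz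
    have := (hV v hv).idxOf_injective.ne hyz
    simp only [IsTopOf, mem_insert, mem_singleton, forall_eq_or_imp, forall_eq, true_or,
      le_refl, true_and]
    omega

theorem d3V_sub_d3V_map_swap_eq [Fintype α] {π : List α} (hπ : IsRanking π)
    {V : Multiset (List α)} (hV : ∀ v ∈ V, IsRanking v) {x y : α}
    (hx : π.idxOf x = π.idxOf y + 1) :
    (d3V π V : ℤ) - d3V (π.map (Equiv.swap x y)) V =
      del V x y - ∑ z ∈ {z | π.idxOf x < π.idxOf z}, Qq V y x z := by
  set Z : Finset α := {z | π.idxOf x < π.idxOf z}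
  have hxy : x ≠ y := by rintro rfl; omega
  have hZ : ∀ z ∈ Z, z ≠ x ∧ z ≠ y := fun z hz =>
    ne_and_ne_of_idxOf_lt hx (mem_filter.1 hz).2
  have hpair : ({x, y} : Finset α) ∉ Z.image fun z => {x, y, z} := by
    simp only [mem_image, not_exists, not_and]
    intro z hz h
    have : z ∈ ({x, y} : Finset α) := h ▸ by simp
    simp only [mem_insert, mem_singleton] at this
    exact (hZ z hz).1 (this.resolve_right (hZ z hz).2)
  have hinj : Set.InjOn (fun z => ({x, y, z} : Finset α)) Z := by
    intro z hz w _ h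
    have : z ∈ ({x, y, w} : Finset α) := by simp only at h; exact h ▸ by simp
    simp only [mem_insert, mem_singleton] at this
    exact (this.resolve_left (hZ z hz).1).resolve_left (hZ z hz).2
  have hδ : (V.countP (fun v => IsTopOf v {x, y} x) : ℤ) -
      V.countP (fun v => IsTopOf v {x, y} y) = del V x y := by
    rw [countP_isTopOf_pair hV hxy, pair_comm, countP_isTopOf_pair hV hxy.symm, del]
  have hQ : ∀ z ∈ Z, (V.countP (fun v => IsTopOf v {x, y, z} x) : ℤ) -
      V.countP (fun v => IsTopOf v {x, y, z} y) = -Qq V y x z := by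
    intro z hz
    obtain ⟨hzx, hzy⟩ := hZ z hz
    rw [countP_isTopOf_triple hV hxy hzx.symm hzy.symm, insert_comm,
      countP_isTopOf_triple hV hxy.symm hzy.symm hzx.symm, Qq]
    push_cast; ring
  rw [d3V_sub_d3V_map_swap hπ hV hx, filter_isTopOf_eq hπ hx, sum_insert hpair, sum_image hinj,
    hδ, sum_congr rfl hQ, sum_neg_distrib, sub_eq_add_neg]

end

theorem stmt13_general [Fintype α] [DecidableEq α]
    (V : Multiset (List α)) (hV : ∀ v ∈ V, IsRanking v)
    (π : List α) (hπ : IsMedian3 V π)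
    (x y : α)
    (hcons : π.idxOf y = π.idxOf x + 1 ∨ π.idxOf x = π.idxOf y + 1)
    (hδ : ∑ z ∈ (Finset.univ : Finset α) \ {x, y}, max 0 (Qq V y x z) < del V x y) :
    π.idxOf x < π.idxOf y := by
  by_contra hyx
  have hx : π.idxOf x = π.idxOf y + 1 := by omega
  have hmedian : d3V π V ≤ d3V (π.map (Equiv.swap x y)) V := hπ.2 _ (hπ.1.map_perm _)
  have hQ : ∑ z ∈ {z | π.idxOf x < π.idxOf z}, Qq V y x z ≤
      ∑ z ∈ (Finset.univ : Finset α) \ {x, y}, max 0 (Qq V y x z) :=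
    calc ∑ z ∈ {z | π.idxOf x < π.idxOf z}, Qq V y x z
        ≤ ∑ z ∈ {z | π.idxOf x < π.idxOf z}, max 0 (Qq V y x z) :=
          sum_le_sum fun _ _ => le_max_right _ _
      _ ≤ ∑ z ∈ (Finset.univ : Finset α) \ {x, y}, max 0 (Qq V y x z) := by
          refine sum_le_sum_of_subset_of_nonneg (fun z hz => ?_) fun _ _ _ => le_max_left _ _
          obtain ⟨hzx, hzy⟩ := ne_and_ne_of_idxOf_lt hx (mem_filter.1 hz).2
          simp [hzx, hzy]
  have := d3V_sub_d3V_map_swap_eq hπ.1 hV hx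
  omega

theorem stmt13 [Fintype α] [DecidableEq α]
    (V : Multiset (List α)) (hV : ∀ v ∈ V, IsRanking v)
    (π : List α) (hπ : IsMedian3 V π)
    (x y : α) (hxy : x ≠ y)
    (hcons : π.idxOf y = π.idxOf x + 1 ∨ π.idxOf x = π.idxOf y + 1)
    (hδ : ∑ z ∈ (Finset.univ : Finset α) \ {x, y}, max 0 (Qq V y x z) < del V x y) :
    π.idxOf x < π.idxOf y :=
  stmt13_general V hV π hπ x y hcons hδ
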